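/- Let Σ, Ψ be n×n positive definite matrices with Ψ diagonal, Σ not diagonal. Then log det(Σ) − log det(Ψ) > ∑_i log((Ψ⁻¹)_{ii}/(Σ⁻¹)_{ii}). -/

import Mathlib

/-!
Apply the strict Hadamard inequality to `P = Σ⁻¹`, which is positive definite and, like `Σ`, not
diagonal. Rescaling `P` to its correlation matrix `C = D P D`, `D = diag (P i i)^(-1/2)`, the
eigenvalues `λ` of `C` are positive with `∑ λ = tr C = n`, so
`det C = ∏ λ < ∏ exp (λ - 1) = 1` unless every `λ = 1`, i.e. unless `C = 1`.
Hence `det Σ⁻¹ < ∏ (Σ⁻¹) i i`; taking logarithms, with `det Ψ = ∏ Ψ i i` and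
`(Ψ⁻¹) i i = (Ψ i i)⁻¹` for diagonal `Ψ`, gives the claim.
-/

open Finset

namespace Matrix

variable {ι : Type*} [Fintype ι] [DecidableEq ι]

theorem IsDiag.inv {α : Type*} [CommRing α] {A : Matrix ι ι α} (h : A.IsDiag) : A⁻¹.IsDiag := by
  rw [← h.diagonal_diag, inv_diagonal]
  exact isDiag_diagonal _

theorem IsDiag.inv_apply_self {K : Type*} [Field K] {A : Matrix ι ι K} (h : A.IsDiag)
    (hA : IsUnit A.det) (i : ι) : A⁻¹ i i = (A i i)⁻¹ := by
  have hA' : ∀ i, A i i ≠ 0 := by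
    rw [← h.diagonal_diag, det_diagonal, isUnit_iff_ne_zero, prod_ne_zero_iff] at hA
    exact fun i => hA i (mem_univ i)
  rw [← h.diagonal_diag, inv_diagonal]
  have hunit : IsUnit A.diag := Pi.isUnit_iff.2 fun i => (hA' i).isUnit
  simp [Ring.inverse, hunit]

theorem PosDef.det_lt_one_of_diag_eq_one {A : Matrix ι ι ℝ} (hA : A.PosDef)
    (hdiag : ∀ i, A i i = 1) (hne : A ≠ 1) : A.det < 1 := by
  set μ := hA.1.eigenvalues
  have hμ_sum : ∑ i, (μ i - 1) = 0 := by
    have := hA.1.trace_eq_sum_eigenvalues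
    simp only [trace, diag_apply, hdiag, sum_const, card_univ, nsmul_eq_mul, mul_one,
      Real.ringHom_apply] at this
    simp [sum_sub_distrib, ← this, μ]
  obtain ⟨j, hj⟩ : ∃ j, μ j ≠ 1 := by
    by_contra! h
    apply hne
    have hμ : hA.1.eigenvalues = 1 := funext h
    rw [hA.1.spectral_theorem]
    simp [hμ]
  calc A.det = ∏ i, μ i := by simpa using hA.1.det_eq_prod_eigenvalues
    _ < ∏ i, Real.exp (μ i - 1) :=
      prod_lt_prod (fun i _ => hA.eigenvalues_pos i)
        (fun i _ => by linarith [Real.add_one_le_exp (μ i - 1)])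
        ⟨j, mem_univ _, by linarith [Real.add_one_lt_exp (sub_ne_zero.2 hj)]⟩
    _ = 1 := by rw [← Real.exp_sum, hμ_sum, Real.exp_zero]

theorem PosDef.det_lt_prod_diag_of_not_isDiag {A : Matrix ι ι ℝ} (hA : A.PosDef)
    (hA' : ¬ A.IsDiag) : A.det < ∏ i, A i i := by
  set d : ι → ℝ := fun i => (√(A i i))⁻¹
  have hd : ∀ i, d i ≠ 0 := fun i => inv_ne_zero (Real.sqrt_pos.2 hA.diag_pos).ne'
  have hdAd : ∀ i, d i * d i = (A i i)⁻¹ := fun i => by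
    rw [← mul_inv, Real.mul_self_sqrt hA.diag_pos.le]
  set C := diagonal d * A * diagonal d
  have hC_apply : ∀ i j, C i j = d i * A i j * d j := fun i j => by
    simp [C, diagonal_mul, mul_diagonal]
  have hC : C.PosDef := by
    have hU : IsUnit (diagonal d) := by
      rw [isUnit_diagonal, Pi.isUnit_iff]
      exact fun i => (hd i).isUnit
    simpa [C, star_eq_conjTranspose, diagonal_conjTranspose] using
      (Matrix.IsUnit.posDef_star_left_conjugate_iff hU).2 hA
  have hC_diag : ∀ i, C i i = 1 := fun i => by
    rw [hC_apply, mul_right_comm, hdAd, inv_mul_cancel₀ hA.diag_pos.ne']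
  have hC_ne : C ≠ 1 := by
    intro h
    apply hA'
    intro i j hij
    have := congr_fun (congr_fun h i) j
    rw [hC_apply, one_apply_ne hij] at this
    simpa [hd] using this
  have hprod_pos : 0 < ∏ i, A i i := prod_pos fun i _ => hA.diag_pos
  have hdet : C.det = A.det / ∏ i, A i i := by
    rw [det_mul, det_mul, det_diagonal, mul_right_comm, ← prod_mul_distrib, div_eq_mul_inv,
      ← prod_inv_distrib, mul_comm]
    simp only [hdAd]
  rw [← div_lt_one hprod_pos, ← hdet]
  exact hC.det_lt_one_of_diag_eq_one hC_diag hC_ne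

end Matrix

open Matrix

theorem logdet_gap_gt_sum_log_precision_ratios
    (n : ℕ) (S Ψ : Matrix (Fin n) (Fin n) ℝ)
    (hS : S.PosDef) (hΨ : Ψ.PosDef)
    (hΨdiag : Ψ.IsDiag) (hSnotdiag : ¬ S.IsDiag) :
    ∑ i, Real.log (Ψ⁻¹ i i / S⁻¹ i i) < Real.log S.det - Real.log Ψ.det := by
  have hP : S⁻¹.PosDef := hS.inv
  have hP_not_diag : ¬ S⁻¹.IsDiag := fun h =>
    hSnotdiag (nonsing_inv_nonsing_inv S hS.det_pos.ne'.isUnit ▸ h.inv)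
  have hΨ_det : Ψ.det = ∏ i, Ψ i i := by
    conv_lhs => rw [← hΨdiag.diagonal_diag]
    exact det_diagonal
  calc ∑ i, Real.log (Ψ⁻¹ i i / S⁻¹ i i)
    _ = -Real.log Ψ.det - Real.log (∏ i, S⁻¹ i i) := by
      rw [hΨ_det, Real.log_prod (fun i _ => hΨ.diag_pos.ne'),
        Real.log_prod (fun i _ => hP.diag_pos.ne'), ← sum_neg_distrib, ← sum_sub_distrib]
      refine sum_congr rfl fun i _ => ?_
      rw [hΨdiag.inv_apply_self hΨ.det_pos.ne'.isUnit, Real.log_div (inv_ne_zero hΨ.diag_pos.ne')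
        hP.diag_pos.ne', Real.log_inv]
    _ < -Real.log Ψ.det - Real.log S⁻¹.det := by
      gcongr
      exacts [hP.det_pos, hP.det_lt_prod_diag_of_not_isDiag hP_not_diag]
    _ = Real.log S.det - Real.log Ψ.det := by
      rw [det_nonsing_inv, Ring.inverse_eq_inv', Real.log_inv]
      ring
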